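/- arXiv:2507.11779 — 2 statements merged into one kernel-verified Lean document; each statement's English description precedes it below -/
import Mathlib

section
/- If a nonnegative random variable A has an IHR distribution and a ≥ 0 is a constant, then the truncated random variable A ∧ a (minimum of A and a) also has an IHR distribution. -/
/-- A CDF `H` on `[0,∞)` has increasing hazard rate (IHR). -/
def IHR (H : ℝ → ℝ) : Prop :=
  ∀ y₁ y₂ Δ : ℝ, 0 ≤ y₁ → y₁ ≤ y₂ → H y₂ < 1 → 0 ≤ Δ →
    (H (y₁ + Δ) - H y₁) / (1 - H y₁) ≤ (H (y₂ + Δ) - H y₂) / (1 - H y₂)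

/-- If a nonnegative random variable `A` has an IHR distribution (CDF `H`)
and `a ≥ 0`, then the truncated variable `A ∧ a`, whose CDF is `H_a(y) = H(y)` for `y < a`
and `H_a(y) = 1` for `y ≥ a`, also has an IHR distribution. -/
theorem stmt4 (H : ℝ → ℝ) (hmono : Monotone H)
    (hrange : ∀ y, 0 ≤ H y ∧ H y ≤ 1) (hIHR : IHR H)
    (a : ℝ) (ha : 0 ≤ a)
    (Ha : ℝ → ℝ) (hHa : ∀ y, Ha y = if y < a then H y else 1) :
    IHR Ha := by
  intro y₁ y₂ Δ hy₁ h12 hlt hΔ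
  -- y₂ < a, else Ha y₂ = 1
  have hy2a : y₂ < a := by
    by_contra h
    rw [hHa y₂, if_neg h] at hlt
    exact lt_irrefl 1 hlt
  have hy1a : y₁ < a := lt_of_le_of_lt h12 hy2a
  rw [hHa y₂, if_pos hy2a] at hlt ⊢
  rw [hHa y₁, if_pos hy1a]
  have hden1 : 0 < 1 - H y₁ := by
    have := hmono h12
    linarith
  have hden2 : 0 < 1 - H y₂ := by linarith
  by_cases hc : y₂ + Δ < a
  · have hc1 : y₁ + Δ < a := by linarith
    rw [hHa (y₁ + Δ), if_pos hc1, hHa (y₂ + Δ), if_pos hc]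
    exact hIHR y₁ y₂ Δ hy₁ h12 hlt hΔ
  · rw [hHa (y₂ + Δ), if_neg hc]
    have hR : (1 - H y₂) / (1 - H y₂) = 1 := div_self (ne_of_gt hden2)
    rw [hR]
    have hle : Ha (y₁ + Δ) ≤ 1 := by
      rw [hHa (y₁ + Δ)]
      split
      · exact (hrange _).2
      · exact le_refl 1
    rw [div_le_one hden1]
    linarith
end

section
/- Let h be a functional on left-truncated trajectories satisfying the Lipschitz bound |h(x_{(-∞,w]}) - h(y_{(-∞,w]})| ≤ K·sup_{u≤w}|x_u - y_u| uniformly in w, with h ≥ 0. Suppose x, x̂ : ℝ → [0,1] are nonincreasing Lipschitz functions solving -v·x'_w = λ·h(x_{(-∞,w]}) a.e. on (A, B) with the same values on (-∞, w₀] for some w₀ ∈ (A,B). Then x = x̂ on [w₀, B). (A DE-FP is uniquely determined by its left tail.) -/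
open MeasureTheory Set

section Aux
open Filter Topology ENNReal


lemma lip_deriv_bound {f : ℝ → ℝ} {L : NNReal} (hl : LipschitzWith L f)
    {d t : ℝ} (hd : HasDerivAt f d t) : |d| ≤ L := by
  have h := hasDerivAt_iff_tendsto_slope.1 hd
  have hb : ∀ᶠ y in 𝓝[≠] t, |slope f t y| ≤ (L : ℝ) := by
    filter_upwards [self_mem_nhdsWithin] with y hy
    have hyt : y ≠ t := hy
    have : |f y - f t| ≤ (L : ℝ) * |y - t| := by
      have := hl.dist_le_mul y t
      simpa [Real.dist_eq] using this
    have hpos : 0 < |y - t| := abs_pos.2 (sub_ne_zero.2 hyt)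
    rw [slope_def_field, abs_div, div_le_iff₀ hpos]
    exact this
  exact le_of_tendsto (h.abs) hb

lemma mono_lip_ftc (f : ℝ → ℝ) (L : NNReal) (hm : Monotone f) (hl : LipschitzWith L f) :
    ∃ g : ℝ → ℝ, Measurable g ∧ (∀ t, 0 ≤ g t ∧ g t ≤ L) ∧
      (∀ᵐ t, HasDerivAt f (g t) t) ∧
      ∀ a b : ℝ, a ≤ b → f b - f a = ∫ t in Set.Ioc a b, g t := by
  have hcont : Continuous f := hl.continuous
  set F := hm.stieltjesFunction with hFdef
  have hFf : (F : ℝ → ℝ) = f := by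
    funext t
    rw [hm.stieltjesFunction_eq]
    exact rightLim_eq_of_tendsto
      ((hcont.tendsto t).mono_left nhdsWithin_le_nhds)
  -- second monotone function
  have hm2 : Monotone (fun t => (L : ℝ) * t - f t) := by
    intro a b hab
    have := hl.dist_le_mul b a
    rw [Real.dist_eq, Real.dist_eq] at this
    have h1 : f b - f a ≤ (L : ℝ) * (b - a) := by
      calc f b - f a ≤ |f b - f a| := le_abs_self _
        _ ≤ (L : ℝ) * |b - a| := this
        _ = (L : ℝ) * (b - a) := by rw [abs_of_nonneg (sub_nonneg.2 hab)]
    simp only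
    linarith
  set F2 := hm2.stieltjesFunction with hF2def
  have hF2f : (F2 : ℝ → ℝ) = fun t => (L : ℝ) * t - f t := by
    funext t
    rw [hm2.stieltjesFunction_eq]
    refine rightLim_eq_of_tendsto ?_
    exact (((continuous_const.mul continuous_id).sub hcont).tendsto t).mono_left
      nhdsWithin_le_nhds
  have hsum : F.measure + F2.measure = (L : ℝ≥0∞) • volume := by
    refine Measure.ext_of_Ioc' _ _ (fun a b hab => ?_) (fun a b hab => ?_)
    · simp only [Measure.coe_add, Pi.add_apply, StieltjesFunction.measure_Ioc]
      exact ENNReal.add_ne_top.2 ⟨ENNReal.ofReal_ne_top, ENNReal.ofReal_ne_top⟩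
    simp only [Measure.coe_add, Pi.add_apply, StieltjesFunction.measure_Ioc, hFf, hF2f,
      Measure.smul_apply, Real.volume_Ioc, smul_eq_mul]
    rw [← ENNReal.ofReal_add (sub_nonneg.2 (hm hab.le)) (sub_nonneg.2 (hm2 hab.le)),
      ← ENNReal.ofReal_coe_nnreal, ← ENNReal.ofReal_mul L.coe_nonneg]
    congr 1
    ring
  have hle : F.measure ≤ (L : ℝ≥0∞) • volume := hsum ▸ Measure.le_add_right le_rfl
  have hac : F.measure ≪ volume := by
    refine (Measure.absolutelyContinuous_of_le hle).trans ?_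
    exact Measure.smul_absolutelyContinuous
  set g₀ : ℝ → ℝ := fun t => (F.measure.rnDeriv volume t).toReal with hg₀def
  have hd : ∀ᵐ t, HasDerivAt f (g₀ t) t := by
    have := F.ae_hasDerivAt
    rw [hFf] at this
    exact this
  have hbd : ∀ᵐ t, g₀ t ≤ (L : ℝ) := by
    filter_upwards [hd] with t ht
    exact (abs_le.1 (lip_deriv_bound hl ht)).2
  refine ⟨fun t => min (g₀ t) (L : ℝ), ?_, ?_, ?_, ?_⟩
  · exact ((Measure.measurable_rnDeriv _ _).ennreal_toReal).min measurable_const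
  · exact fun t => ⟨le_min ENNReal.toReal_nonneg L.coe_nonneg, min_le_right _ _⟩
  · filter_upwards [hd, hbd] with t ht hbt
    rwa [min_eq_left hbt]
  · intro a b hab
    have hmeq : F.measure = volume.withDensity (F.measure.rnDeriv volume) :=
      (Measure.absolutelyContinuous_iff_withDensity_rnDeriv_eq.mp hac).symm
    have h1 : F.measure (Ioc a b) = ENNReal.ofReal (f b - f a) := by
      rw [StieltjesFunction.measure_Ioc, hFf]
    have h3 : F.measure (Ioc a b) = ∫⁻ t in Ioc a b, F.measure.rnDeriv volume t := by
      conv_lhs => rw [hmeq]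
      rw [withDensity_apply _ measurableSet_Ioc]
    have h4 : (∫⁻ t in Ioc a b, F.measure.rnDeriv volume t).toReal
        = ∫ t in Ioc a b, g₀ t := by
      rw [← integral_toReal ((Measure.measurable_rnDeriv _ _).aemeasurable) ?_]
      exact ae_restrict_of_ae (Measure.rnDeriv_lt_top F.measure volume)
    have h5 : (∫ t in Ioc a b, g₀ t) = ∫ t in Ioc a b, min (g₀ t) (L : ℝ) := by
      refine integral_congr_ae ?_
      filter_upwards [ae_restrict_of_ae hbd] with t ht
      rw [min_eq_left ht]
    rw [← h5, ← h4, ← h3, h1, ENNReal.toReal_ofReal (sub_nonneg.2 (hm hab))]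


end Aux

/-- A DE-FP is uniquely determined by its left tail. Let `h w x` be a
nonnegative functional depending only on the restriction of `x` to `(-∞,w]` and
`K`-Lipschitz in the sup-norm of that restriction. If two nonincreasing Lipschitz
`[0,1]`-valued solutions of `-v·x'_w = λ·h(x_{(-∞,w]})` (a.e. on `(A,B)`) agree on
`(-∞,w₀]` for some `w₀ ∈ (A,B)`, then they agree on `[w₀,B)`. -/

theorem stmt16 (h : ℝ → (ℝ → ℝ) → ℝ) (K : ℝ) (hK : 0 ≤ K)
    (hdep : ∀ w : ℝ, ∀ x y : ℝ → ℝ, (∀ u ≤ w, x u = y u) → h w x = h w y)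
    (hLiph : ∀ w : ℝ, ∀ x y : ℝ → ℝ, ∀ M : ℝ,
      (∀ u ≤ w, |x u - y u| ≤ M) → |h w x - h w y| ≤ K * M)
    (hnonneg : ∀ w x, 0 ≤ h w x)
    (v lam A B w₀ : ℝ) (hv : 0 < v) (hlam : 0 < lam)
    (hw₀ : w₀ ∈ Set.Ioo A B)
    (x xhat : ℝ → ℝ) (L : NNReal)
    (hxLip : LipschitzWith L x) (hxhatLip : LipschitzWith L xhat)
    (hxanti : Antitone x) (hxhatanti : Antitone xhat)
    (hxrange : ∀ w, x w ∈ Set.Icc (0:ℝ) 1)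
    (hxhatrange : ∀ w, xhat w ∈ Set.Icc (0:ℝ) 1)
    (hxde : ∀ᵐ w ∂(volume.restrict (Set.Ioo A B)),
      ∀ d : ℝ, HasDerivAt x d w → -(v * d) = lam * h w x)
    (hxhatde : ∀ᵐ w ∂(volume.restrict (Set.Ioo A B)),
      ∀ d : ℝ, HasDerivAt xhat d w → -(v * d) = lam * h w xhat)
    (htail : ∀ u ≤ w₀, x u = xhat u) :
    ∀ w ∈ Set.Ico w₀ B, x w = xhat w := by
  obtain ⟨hA, hB⟩ := hw₀
  obtain ⟨g, hgmeas, hgbd, hgd, hgftc⟩ :=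
    mono_lip_ftc (fun t => -x t) L (fun a b hab => neg_le_neg (hxanti hab)) hxLip.neg
  obtain ⟨G, hGmeas, hGbd, hGd, hGftc⟩ :=
    mono_lip_ftc (fun t => -xhat t) L (fun a b hab => neg_le_neg (hxhatanti hab)) hxhatLip.neg
  have hxint : ∀ a b : ℝ, a ≤ b → x a - x b = ∫ t in Set.Ioc a b, g t := by
    intro a b hab
    have := hgftc a b hab
    linarith
  have hxhatint : ∀ a b : ℝ, a ≤ b → xhat a - xhat b = ∫ t in Set.Ioc a b, G t := by
    intro a b hab
    have := hGftc a b hab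
    linarith
  have hgx : ∀ᵐ u ∂(volume.restrict (Set.Ioo A B)), v * g u = lam * h u x := by
    filter_upwards [hxde, ae_restrict_of_ae hgd] with w hw hdw
    have hx' : HasDerivAt x (-(g w)) w := by
      have e : x = fun t => -(-x t) := by funext t; simp
      rw [e]; exact hdw.neg
    have := hw _ hx'
    linarith
  have hGx : ∀ᵐ u ∂(volume.restrict (Set.Ioo A B)), v * G u = lam * h u xhat := by
    filter_upwards [hxhatde, ae_restrict_of_ae hGd] with w hw hdw
    have hx' : HasDerivAt xhat (-(G w)) w := by
      have e : xhat = fun t => -(-xhat t) := by funext t; simp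
      rw [e]; exact hdw.neg
    have := hw _ hx'
    linarith
  set δ : ℝ := v / (2 * (lam * K + v)) with hδdef
  have hδpos : 0 < δ := by
    apply div_pos hv
    have : 0 ≤ lam * K := mul_nonneg hlam.le hK
    linarith
  have hCδ : lam * K / v * δ ≤ 1 / 2 := by
    rw [hδdef, div_mul_div_comm, div_le_iff₀ (by positivity)]
    have h1 : 0 ≤ lam * K := mul_nonneg hlam.le hK
    nlinarith [mul_nonneg h1 hv.le]
  have key : ∀ w₁ b : ℝ, w₀ ≤ w₁ → w₁ ≤ b → b < B → b - w₁ ≤ δ →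
      (∀ u, u ≤ w₁ → x u = xhat u) → ∀ c, w₁ ≤ c → c ≤ b → x c = xhat c := by
    intro w₁ b hw₁ hw₁b hbB hδb htl c hc1 hc2
    have hcont : ContinuousOn (fun t => |x t - xhat t|) (Set.Icc w₁ b) :=
      ((hxLip.continuous.sub hxhatLip.continuous).abs).continuousOn
    obtain ⟨t₀, ht₀mem, ht₀max⟩ := isCompact_Icc.exists_isMaxOn (Set.nonempty_Icc.2 hw₁b) hcont
    set M := |x t₀ - xhat t₀| with hMdef
    have hM0 : 0 ≤ M := abs_nonneg _
    have hhb : ∀ u, u ∈ Set.Ioc w₁ b → |h u xhat - h u x| ≤ K * M := by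
      intro u hu
      refine hLiph u xhat x M (fun t ht => ?_)
      rcases le_or_gt t w₁ with h1 | h1
      · rw [abs_sub_comm, htl t h1]
        simpa using hM0
      · have htm : t ∈ Set.Icc w₁ b := ⟨h1.le, ht.trans hu.2⟩
        have := ht₀max htm
        rw [abs_sub_comm]
        exact this
    have est : ∀ c', w₁ ≤ c' → c' ≤ b → |x c' - xhat c'| ≤ lam * K / v * M * (c' - w₁) := by
      intro c' hc1' hc2'
      have hsub : Set.Ioc w₁ c' ⊆ Set.Ioo A B := fun u hu =>
        ⟨(hA.trans_le hw₁).trans hu.1, lt_of_le_of_lt (hu.2.trans hc2') hbB⟩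
      have int_g : IntegrableOn g (Set.Ioc w₁ c') := by
        refine Integrable.mono' (g := fun _ => (L:ℝ)) (integrableOn_const measure_Ioc_lt_top.ne)
          hgmeas.aestronglyMeasurable.restrict (Filter.Eventually.of_forall fun t => ?_)
        rw [Real.norm_eq_abs, abs_of_nonneg (hgbd t).1]
        exact (hgbd t).2
      have int_G : IntegrableOn G (Set.Ioc w₁ c') := by
        refine Integrable.mono' (g := fun _ => (L:ℝ)) (integrableOn_const measure_Ioc_lt_top.ne)
          hGmeas.aestronglyMeasurable.restrict (Filter.Eventually.of_forall fun t => ?_)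
        rw [Real.norm_eq_abs, abs_of_nonneg (hGbd t).1]
        exact (hGbd t).2
      have e1 := hxint w₁ c' hc1'
      have e2 := hxhatint w₁ c' hc1'
      have e3 : x w₁ = xhat w₁ := htl w₁ le_rfl
      have e4 : x c' - xhat c' = ∫ t in Set.Ioc w₁ c', (G t - g t) := by
        rw [integral_sub int_G int_g]
        linarith
      have haeb : ∀ᵐ u ∂(volume.restrict (Set.Ioc w₁ c')),
          ‖G u - g u‖ ≤ lam * K / v * M := by
        filter_upwards [ae_restrict_of_ae_restrict_of_subset hsub hgx,
          ae_restrict_of_ae_restrict_of_subset hsub hGx,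
          ae_restrict_mem measurableSet_Ioc] with u h1 h2 hu
        have hvne : v ≠ 0 := hv.ne'
        have heq : G u - g u = lam / v * (h u xhat - h u x) := by
          field_simp
          linarith
        rw [Real.norm_eq_abs, heq, abs_mul, abs_of_nonneg (by positivity : (0:ℝ) ≤ lam / v)]
        have := hhb u (⟨hu.1, hu.2.trans hc2'⟩ : u ∈ Set.Ioc w₁ b)
        calc lam / v * |h u xhat - h u x| ≤ lam / v * (K * M) := by
              apply mul_le_mul_of_nonneg_left this (by positivity)
          _ = lam * K / v * M := by ring
      have hnorm := norm_setIntegral_le_of_norm_le_const_ae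
        (measure_Ioc_lt_top : volume (Set.Ioc w₁ c') < ⊤) haeb
      rw [← e4] at hnorm
      rw [Real.volume_real_Ioc_of_le hc1'] at hnorm
      simpa [Real.norm_eq_abs] using hnorm
    have hM_le := est t₀ ht₀mem.1 ht₀mem.2
    have hMzero : M = 0 := by
      have h1 : t₀ - w₁ ≤ δ := by
        have := ht₀mem.2
        linarith
      have h2 : lam * K / v * M * (t₀ - w₁) ≤ lam * K / v * δ * M := by
        have hC : 0 ≤ lam * K / v := by positivity
        have := mul_le_mul_of_nonneg_left h1 (mul_nonneg hC hM0)
        nlinarith [this]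
      have h3 : M ≤ 1 / 2 * M := by
        calc M ≤ lam * K / v * δ * M := by linarith
          _ ≤ 1 / 2 * M := by nlinarith [mul_le_mul_of_nonneg_right hCδ hM0]
      linarith
    have h5 : |x c - xhat c| ≤ |x t₀ - xhat t₀| := ht₀max (⟨hc1, hc2⟩ : c ∈ Set.Icc w₁ b)
    rw [← hMdef, hMzero] at h5
    have habs : |x c - xhat c| = 0 := le_antisymm h5 (abs_nonneg _)
    have := abs_eq_zero.1 habs
    linarith
  have main : ∀ n : ℕ, ∀ u, u ≤ w₀ + n * δ → u < B → x u = xhat u := by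
    intro n
    induction n with
    | zero =>
      intro u hu _
      exact htail u (by simpa using hu)
    | succ n ih =>
      intro u hu huB
      rcases le_or_gt u (w₀ + n * δ) with h1 | h1
      · exact ih u h1 huB
      · refine key (w₀ + n * δ) u ?_ h1.le huB ?_ ?_ u h1.le le_rfl
        · have : (0:ℝ) ≤ n * δ := by positivity
          linarith
        · push_cast at hu
          linarith
        · intro t ht
          rcases le_or_gt t w₀ with h2 | h2
          · exact htail t h2
          · exact ih t ht (lt_of_le_of_lt ht (h1.trans huB))
  intro w hw
  obtain ⟨n, hn⟩ := exists_nat_ge ((w - w₀) / δ)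
  refine main n w ?_ hw.2
  rw [div_le_iff₀ hδpos] at hn
  linarith
end
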